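/- Let G be a group without property (T) in the sense that there exists an unbounded normalized nonnegative negative definite function d on G, and pick distinct elements g_n ∈ G with d(g_n) ≥ n for each n ∈ ℕ. For any sequence c = (c_n) ∈ ℓ²(ℕ) ∖ ℓ¹(ℕ), define ξ_c ∈ ℓ²(G) by ξ_c(g_n) = c_n and ξ_c(g) = 0 otherwise. Then ξ_c ∉ ℓ¹(G), but for every t > 0 the pointwise product g ↦ e^{-t d(g)} ξ_c(g) belongs to ℓ¹(G). -/
import Mathlib


/-- If `d` is an unbounded normalized nonnegative negative definite function
witnessed by distinct `g_n` with `d(g_n) ≥ n`, and `c ∈ ℓ²(ℕ)\ℓ¹(ℕ)`, then the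
function `ξ_c` supported on `{g_n}` with values `c_n` is in `ℓ²(G)∖ℓ¹(G)`, yet
`e^{-td}·ξ_c ∈ ℓ¹(G)` for every `t > 0`. -/
theorem stmt_9 {G : Type*} [Group G] [Countable G] [Infinite G]
    (d : G → ℝ) (hd : ∀ g, 0 ≤ d g) (hde : d 1 = 0)
    (g : ℕ → G) (hginj : Function.Injective g)
    (hdg : ∀ n : ℕ, (n : ℝ) ≤ d (g n))
    (c : ℕ → ℂ) (hc2 : Summable (fun n => ‖c n‖ ^ 2))
    (hc1 : ¬ Summable (fun n => ‖c n‖))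
    (ξ : G → ℂ) (hξ : ∀ n, ξ (g n) = c n)
    (hξ0 : ∀ x : G, x ∉ Set.range g → ξ x = 0) :
    Summable (fun x : G => ‖ξ x‖ ^ 2) ∧
    ¬ Summable (fun x : G => ‖ξ x‖) ∧
    (∀ t : ℝ, 0 < t → Summable (fun x : G => ‖(Real.exp (-t * d x) : ℂ) * ξ x‖)) := by
  refine ⟨?_, ?_, ?_⟩
  · rw [← hginj.summable_iff (f := fun x => ‖ξ x‖ ^ 2)
      (fun x hx => by simp [hξ0 x hx])]
    have e : (fun x => ‖ξ x‖ ^ 2) ∘ g = fun n => ‖c n‖ ^ 2 := by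
      funext n; simp [hξ]
    rw [e]; exact hc2
  · intro h
    apply hc1
    have := (hginj.summable_iff (f := fun x => ‖ξ x‖)
      (fun x hx => by simp [hξ0 x hx])).2 h
    have e : (fun x => ‖ξ x‖) ∘ g = fun n => ‖c n‖ := by
      funext n; simp [hξ]
    rwa [e] at this
  · intro t ht
    rw [← hginj.summable_iff
      (f := fun x => ‖(Real.exp (-t * d x) : ℂ) * ξ x‖)
      (fun x hx => by simp [hξ0 x hx])]
    have key : Summable (fun n : ℕ => Real.exp (-t * n) ^ 2 + ‖c n‖ ^ 2) := by
      refine Summable.add ?_ hc2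
      have : Summable (fun n : ℕ => Real.exp (-(2*t)) ^ n) :=
        summable_geometric_of_lt_one (Real.exp_nonneg _)
          (Real.exp_lt_one_iff.2 (by linarith))
      refine this.congr fun n => ?_
      rw [← Real.exp_nat_mul, sq, ← Real.exp_add]
      ring_nf
    refine Summable.of_nonneg_of_le (fun n => norm_nonneg _) (fun n => ?_) key
    simp only [Function.comp, hξ, norm_mul, Complex.norm_real, Real.norm_eq_abs,
      Real.abs_exp]
    calc Real.exp (-t * d (g n)) * ‖c n‖ ≤ Real.exp (-t * n) * ‖c n‖ := by
          apply mul_le_mul_of_nonneg_right _ (norm_nonneg _)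
          exact Real.exp_le_exp.2 (by nlinarith [hdg n])
      _ ≤ Real.exp (-t * n) ^ 2 + ‖c n‖ ^ 2 := by nlinarith [Real.exp_nonneg (-t * n), norm_nonneg (c n), sq_nonneg (Real.exp (-t * n) - ‖c n‖)]
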